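/- arXiv:2508.19252 — 5 statements merged into one kernel-verified Lean document; each statement's English description precedes it below -/
import Mathlib

section
/- Let y₀ > 0, y ≥ y₀, x₀, x be reals, and let α, n > 0. If (x-1)/y ≥ (x₀-1)/y₀ + nα, then the strip S = {(a,b) ∈ ℝ² : 0 < b x - a y ≤ 1, b > 0} is disjoint from the triangle Ω = {(a,b) : 0 < b ≤ 1, (x₀/y₀) b - 1/y₀ ≤ a < (x₀/y₀ + nα) b - 1/y₀}. -/
/-!
Both the left edge `a = (b x - 1) / y` of the strip and the right edge
`a = (x₀ / y₀ + n α) b - 1 / y₀` of the triangle are affine in `b`. At `b = 0` the strip edge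
lies to the right because `1 / y ≤ 1 / y₀`, and at `b = 1` by the hypothesis on `(x - 1) / y`;
hence it lies to the right on all of `0 ≤ b ≤ 1`, and no point is both in the strip and strictly
left of the triangle's right edge.
-/

lemma affine_nonneg_of_nonneg_at_zero_one {b c d : ℝ} (hb₀ : 0 ≤ b) (hb₁ : b ≤ 1)
    (h₀ : 0 ≤ d) (h₁ : 0 ≤ c + d) : 0 ≤ b * c + d := by
  have hconvex : b * c + d = b * (c + d) + (1 - b) * d := by ring
  rw [hconvex]
  exact add_nonneg (mul_nonneg hb₀ h₁) (mul_nonneg (sub_nonneg.2 hb₁) h₀)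

lemma triangle_right_edge_le_strip_left_edge {x₀ y₀ x y m b : ℝ} (hy₀ : 0 < y₀) (hy : y₀ ≤ y)
    (h : (x - 1) / y ≥ (x₀ - 1) / y₀ + m) (hb₀ : 0 ≤ b) (hb₁ : b ≤ 1) :
    (x₀ / y₀ + m) * b - 1 / y₀ ≤ (b * x - 1) / y := by
  have hinv : 1 / y ≤ 1 / y₀ := one_div_le_one_div_of_le hy₀ hy
  have hend : 0 ≤ (x / y - x₀ / y₀ - m) + (1 / y₀ - 1 / y) := by
    have e : (x / y - x₀ / y₀ - m) + (1 / y₀ - 1 / y) = (x - 1) / y - ((x₀ - 1) / y₀ + m) := by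
      ring
    rw [e]
    exact sub_nonneg.2 h
  have hdiff := affine_nonneg_of_nonneg_at_zero_one hb₀ hb₁ (sub_nonneg.2 hinv) hend
  have e : (b * x - 1) / y - ((x₀ / y₀ + m) * b - 1 / y₀) =
      b * (x / y - x₀ / y₀ - m) + (1 / y₀ - 1 / y) := by ring
  linarith

theorem strip_disjoint_from_transversal_general (x₀ y₀ x y α n : ℝ)
    (hy₀ : 0 < y₀) (hy : y₀ ≤ y)
    (h : (x - 1) / y ≥ (x₀ - 1) / y₀ + n * α) :
    {p : ℝ × ℝ | 0 < p.2 * x - p.1 * y ∧ p.2 * x - p.1 * y ≤ 1 ∧ 0 < p.2} ∩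
      {p : ℝ × ℝ | 0 < p.2 ∧ p.2 ≤ 1 ∧ (x₀ / y₀) * p.2 - 1 / y₀ ≤ p.1 ∧
        p.1 < (x₀ / y₀ + n * α) * p.2 - 1 / y₀} = ∅ := by
  refine Set.eq_empty_iff_forall_notMem.2 fun ⟨a, b⟩ ⟨⟨_, hstrip, hb⟩, _, hb₁, _, ha⟩ => ?_
  have hedges := triangle_right_edge_le_strip_left_edge hy₀ hy h hb.le hb₁
  have hleft : (b * x - 1) / y ≤ a := by
    rw [div_le_iff₀ (hy₀.trans_le hy)]
    linarith
  linarith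

/-- If the left edge of the candidacy strip of `(x,y)` meets `b = 1` to the right of the
transversal, then the strip is disjoint from the transversal triangle `Ω`. -/
theorem strip_disjoint_from_transversal (x₀ y₀ x y α n : ℝ)
    (hy₀ : 0 < y₀) (hy : y₀ ≤ y) (hα : 0 < α) (hn : 0 < n)
    (h : (x - 1) / y ≥ (x₀ - 1) / y₀ + n * α) :
    {p : ℝ × ℝ | 0 < p.2 * x - p.1 * y ∧ p.2 * x - p.1 * y ≤ 1 ∧ 0 < p.2} ∩
      {p : ℝ × ℝ | 0 < p.2 ∧ p.2 ≤ 1 ∧ (x₀ / y₀) * p.2 - 1 / y₀ ≤ p.1 ∧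
        p.1 < (x₀ / y₀ + n * α) * p.2 - 1 / y₀} = ∅ :=
  strip_disjoint_from_transversal_general x₀ y₀ x y α n hy₀ hy h
end

section
/- Let x, y, u, v, a, b, a' be reals with y > 0, v > 0, 0 < b ≤ 1. Suppose u/v ≥ x/y, 0 < u - a' v ≤ 1, and a' = (x-1)/y. Then for every b ∈ (0,1]: b(x/y) - 1/v ≤ b(u/v) - 1/v ≤ b(x/y) - 1/y. Moreover, if additionally 0 < b x - a y ≤ 1 for some a, then 0 < b u - a v ≤ 1. -/
/-!
Divided by its height, the candidacy strip of `(x, y)` at height `b` is the interval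
`b * (x / y) - 1 / y ≤ a < b * (x / y)`. Dividing the candidacy of `(u, v)` at
`((x - 1) / y, 1)` by `v` gives `u / v - x / y ≤ 1 / v - 1 / y`; together with
`x / y ≤ u / v` and `0 < b ≤ 1` this makes the interval of `(u, v)` contain that of `(x, y)`.
-/

lemma mem_strip_iff {x y a b : ℝ} (hy : 0 < y) :
    (0 < b * x - a * y ∧ b * x - a * y ≤ 1) ↔ (b * (x / y) - 1 / y ≤ a ∧ a < b * (x / y)) := by
  have hscale : b * x - a * y = (b * (x / y) - a) * y := by field_simp
  rw [hscale, mul_pos_iff_of_pos_right hy, ← le_div_iff₀ hy, sub_pos, and_comm]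
  exact and_congr_left' (by constructor <;> intro h <;> linarith)

lemma div_sub_div_le_of_sub_div_mul_le_one {x y u v : ℝ} (hv : 0 < v)
    (h : u - (x - 1) / y * v ≤ 1) : u / v - x / y ≤ 1 / v - 1 / y := by
  have hscaled := div_le_div_of_nonneg_right h hv.le
  rw [sub_div, mul_div_cancel_right₀ _ hv.ne', sub_div] at hscaled
  linarith

theorem candidacy_strip_inclusion_general (x y u v a' : ℝ) (hy : 0 < y) (hv : 0 < v)
    (hslope : u / v ≥ x / y) (ha' : a' = (x - 1) / y)
    (hc2 : u - a' * v ≤ 1) :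
    (∀ b : ℝ, 0 < b → b ≤ 1 →
      b * (x / y) - 1 / v ≤ b * (u / v) - 1 / v ∧
      b * (u / v) - 1 / v ≤ b * (x / y) - 1 / y) ∧
    (∀ a b : ℝ, 0 < b → b ≤ 1 → 0 < b * x - a * y → b * x - a * y ≤ 1 →
      0 < b * u - a * v ∧ b * u - a * v ≤ 1) := by
  subst ha'
  have hgap := div_sub_div_le_of_sub_div_mul_le_one hv hc2
  have hchain : ∀ b : ℝ, 0 < b → b ≤ 1 →
      b * (x / y) - 1 / v ≤ b * (u / v) - 1 / v ∧
      b * (u / v) - 1 / v ≤ b * (x / y) - 1 / y := by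
    intro b hb hb1
    have hshrink := mul_le_of_le_one_left (sub_nonneg.2 hslope) hb1
    rw [mul_sub] at hshrink
    exact ⟨sub_le_sub_right (mul_le_mul_of_nonneg_left hslope hb.le) _, by linarith⟩
  refine ⟨hchain, fun a b hb hb1 hpos hle => ?_⟩
  obtain ⟨hlo, hhi⟩ := (mem_strip_iff hy).1 ⟨hpos, hle⟩
  obtain ⟨hleft, hright⟩ := hchain b hb hb1
  exact (mem_strip_iff hv).2 ⟨by linarith, by linarith⟩

/-- The key inequality chain: if `(u,v)` is a candidate at `((x-1)/y, 1)` with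
`u/v ≥ x/y`, then for all `b ∈ (0,1]` the stated inequalities hold, and any point
`(a,b)` of the candidacy strip of `(x,y)` lies in the candidacy strip of `(u,v)`. -/
theorem candidacy_strip_inclusion (x y u v a' : ℝ) (hy : 0 < y) (hv : 0 < v)
    (hslope : u / v ≥ x / y) (ha' : a' = (x - 1) / y)
    (hc1 : 0 < u - a' * v) (hc2 : u - a' * v ≤ 1) :
    (∀ b : ℝ, 0 < b → b ≤ 1 →
      b * (x / y) - 1 / v ≤ b * (u / v) - 1 / v ∧
      b * (u / v) - 1 / v ≤ b * (x / y) - 1 / y) ∧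
    (∀ a b : ℝ, 0 < b → b ≤ 1 → 0 < b * x - a * y → b * x - a * y ≤ 1 →
      0 < b * u - a * v ∧ b * u - a * v ≤ 1) :=
  candidacy_strip_inclusion_general x y u v a' hy hv hslope ha' hc2
end

section
/- Let u, v, a, b be reals with v > 0, b > 0, and 0 < b u - a v ≤ 1 (so (u,v) lies strictly inside the strip S_Λ(a,b)). Then the region R = {(x,y) : 0 < b x - a y ≤ 1, y > 0, v x - u y ≥ 0} is bounded. Conversely, if b u - a v = 0 with v > 0, b > 0, then R is unbounded. -/
/-!
Write `D = b u - a v`. For `(x, y)` in the region the identity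
`D y = v (b x - a y) - b (v x - u y)` gives `D y ≤ v`, so when `D > 0` the height is bounded,
and then `b x = (b x - a y) + a y` bounds the abscissa. When `D = 0` the region is invariant
under translation by `(u, v)`, so it contains points `(t u / v + 1 / b, t)` of every height `t > 0`.
-/

open Set Bornology

def winnerRegion (u v a b : ℝ) : Set (ℝ × ℝ) :=
  {p | (0 < b * p.1 - a * p.2 ∧ b * p.1 - a * p.2 ≤ 1) ∧ 0 < p.2 ∧ v * p.1 - u * p.2 ≥ 0}

section

variable {u v a b : ℝ} {p : ℝ × ℝ}

lemma snd_le_of_mem_winnerRegion (hv : 0 ≤ v) (hb : 0 ≤ b) (hD : 0 < b * u - a * v)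
    (hp : p ∈ winnerRegion u v a b) : p.2 ≤ v / (b * u - a * v) := by
  obtain ⟨⟨-, hstrip⟩, -, hslope⟩ := hp
  rw [le_div_iff₀ hD]
  calc p.2 * (b * u - a * v) = v * (b * p.1 - a * p.2) - b * (v * p.1 - u * p.2) := by ring
    _ ≤ v * 1 - b * 0 := by gcongr
    _ = v := by ring

lemma abs_fst_le_of_mem_winnerRegion (hb : 0 < b) (hp : p ∈ winnerRegion u v a b) {M : ℝ}
    (hM : p.2 ≤ M) : |p.1| ≤ (1 + |a| * M) / b := by
  obtain ⟨⟨hpos, hstrip⟩, hy, -⟩ := hp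
  rw [le_div_iff₀ hb]
  calc |p.1| * b = |(b * p.1 - a * p.2) + a * p.2| := by
        rw [sub_add_cancel, abs_mul, abs_of_pos hb, mul_comm]
    _ ≤ |b * p.1 - a * p.2| + |a| * |p.2| := by rw [← abs_mul]; exact abs_add_le _ _
    _ ≤ 1 + |a| * M := by
        rw [abs_of_pos hpos, abs_of_pos hy]; gcongr

theorem isBounded_winnerRegion (hv : 0 < v) (hb : 0 < b) (hD : 0 < b * u - a * v) :
    IsBounded (winnerRegion u v a b) := by
  set M := v / (b * u - a * v)
  set K := (1 + |a| * M) / b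
  refine ((Metric.isBounded_Icc (-K) K).prod (Metric.isBounded_Icc 0 M)).subset fun p hp => ?_
  have hy := snd_le_of_mem_winnerRegion hv.le hb.le hD hp
  exact ⟨abs_le.mp (abs_fst_le_of_mem_winnerRegion hb hp hy), hp.2.1.le, hy⟩

lemma Ioi_subset_image_snd_winnerRegion (hv : 0 < v) (hb : 0 < b) (hD : b * u - a * v = 0) :
    Ioi 0 ⊆ Prod.snd '' winnerRegion u v a b := by
  intro t (ht : 0 < t)
  have hstrip : b * (t * u / v + 1 / b) - a * t = 1 := by
    field_simp
    linear_combination t * hD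
  have hslope : v * (t * u / v + 1 / b) - u * t = v / b := by
    field_simp
    ring
  refine ⟨(t * u / v + 1 / b, t), ⟨⟨?_, ?_⟩, ht, ?_⟩, rfl⟩
  · rw [hstrip]; exact one_pos
  · rw [hstrip]
  · rw [hslope]; positivity

theorem not_isBounded_winnerRegion (hv : 0 < v) (hb : 0 < b) (hD : b * u - a * v = 0) :
    ¬ IsBounded (winnerRegion u v a b) := fun h =>
  not_bddAbove_Ioi (0 : ℝ) <|
    h.image_snd.bddAbove.mono (Ioi_subset_image_snd_winnerRegion hv hb hD)

end

/-- The region of possible winners against a candidate `(u,v)` at `(a,b)` is bounded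
iff `b*u - a*v ≠ 0`: bounded when `0 < b*u - a*v ≤ 1`, unbounded when `b*u - a*v = 0`. -/
theorem winner_region_bounded (u v a b : ℝ) (hv : 0 < v) (hb : 0 < b) :
    ((0 < b * u - a * v ∧ b * u - a * v ≤ 1) →
      Bornology.IsBounded {p : ℝ × ℝ | (0 < b * p.1 - a * p.2 ∧ b * p.1 - a * p.2 ≤ 1) ∧
        0 < p.2 ∧ v * p.1 - u * p.2 ≥ 0}) ∧
    (b * u - a * v = 0 →
      ¬ Bornology.IsBounded {p : ℝ × ℝ | (0 < b * p.1 - a * p.2 ∧ b * p.1 - a * p.2 ≤ 1) ∧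
        0 < p.2 ∧ v * p.1 - u * p.2 ≥ 0}) :=
  ⟨fun hD => isBounded_winnerRegion hv hb hD.1, not_isBounded_winnerRegion hv hb⟩
end

section
/- The vector w₁ = (2 + 3cos(2π/7), sin(2π/7)) satisfies 0 ≤ (2 + 3cos(2π/7)) - a₁ · sin(2π/7) < 1 with a₁ = (3cos(π/7) - 1)/sin(π/7); that is, w₁ is a candidate left winner at the right endpoint a₁ of the transversal top edge for the double heptagon. -/
open Real

/-! By the double-angle formulas the quantity collapses to `2 cos(π/7) - 1`, and
`cos 0 > cos(π/7) > cos(π/3) = 1/2` puts it in `[0, 1)`. -/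

theorem two_add_three_cos_two_mul_sub_div_sin_mul_sin_two_mul {x : ℝ} (hx : sin x ≠ 0) :
    2 + 3 * cos (2 * x) - (3 * cos x - 1) / sin x * sin (2 * x) = 2 * cos x - 1 := by
  rw [sin_two_mul, cos_two_mul]
  field_simp
  ring

theorem half_lt_cos_pi_div_seven : 1 / 2 < cos (π / 7) := by
  rw [← cos_pi_div_three]
  exact cos_lt_cos_of_nonneg_of_le_pi (by positivity) (by linarith [pi_pos]) (by linarith [pi_pos])

theorem cos_pi_div_seven_lt_one : cos (π / 7) < 1 := by
  rw [← cos_zero]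
  exact cos_lt_cos_of_nonneg_of_le_pi le_rfl (by linarith [pi_pos]) (by positivity)

/-- `w₁ = (2 + 3cos(2π/7), sin(2π/7))` is a candidate left winner at
`a₁ = (3cos(π/7) - 1)/sin(π/7)`. -/
theorem w1_candidate_left_winner :
    0 ≤ (2 + 3 * cos (2 * π / 7)) - ((3 * cos (π / 7) - 1) / sin (π / 7)) * sin (2 * π / 7) ∧
    (2 + 3 * cos (2 * π / 7)) - ((3 * cos (π / 7) - 1) / sin (π / 7)) * sin (2 * π / 7) < 1 := by
  have hsin : sin (π / 7) ≠ 0 :=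
    (sin_pos_of_pos_of_lt_pi (by positivity) (by linarith [pi_pos])).ne'
  rw [mul_div_assoc, two_add_three_cos_two_mul_sub_div_sin_mul_sin_two_mul hsin]
  constructor <;> linarith [half_lt_cos_pi_div_seven, cos_pi_div_seven_lt_one]
end

section
/- The five points a₁ > a₂ > a₃ > a₄ > a₅ are strictly decreasing, where a₁ = (3cos(π/7)-1)/sin(π/7), a₂ = (1+3cos(2π/7))/sin(2π/7), a₃ = (4cos(π/7)+3cos(3π/7)-1)/sin(3π/7), a₄ = (4cos(π/7)+cos(3π/7)-1)/sin(3π/7), a₅ = (1+cos(2π/7))/sin(2π/7), and moreover a₅ > (cos(π/7)-1)/sin(π/7). -/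
/-!
With `c = cos x` and `s = sin x`, the double- and triple-angle formulas write every point as
`f(c) / s` for an explicit rational function `f`, so the chain is a chain of inequalities between
rational functions of `c` alone. These hold as soon as `√3 / 2 < c < 1`, that is for every angle
`0 < x < π / 6`, and in particular for `x = π / 7`.
-/

open Real

theorem sin_three_mul_eq_sin_mul (x : ℝ) : sin (3 * x) = sin x * (4 * cos x ^ 2 - 1) := by
  rw [sin_three_mul]
  linear_combination (-4 * sin x) * sin_sq_add_cos_sq x

theorem one_add_three_cos_two_mul_div_sin_two_mul (x : ℝ) :
    (1 + 3 * cos (2 * x)) / sin (2 * x) = (3 * cos x ^ 2 - 1) / cos x / sin x := by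
  rw [sin_two_mul, cos_two_mul, div_div, mul_comm (cos x)]
  ring

theorem one_add_cos_two_mul_div_sin_two_mul {x : ℝ} (hx : cos x ≠ 0) :
    (1 + cos (2 * x)) / sin (2 * x) = cos x / sin x := by
  rw [sin_two_mul, cos_two_mul]
  field_simp
  ring

theorem four_cos_add_three_cos_three_mul_sub_one_div_sin_three_mul (x : ℝ) :
    (4 * cos x + 3 * cos (3 * x) - 1) / sin (3 * x)
      = (12 * cos x ^ 3 - 5 * cos x - 1) / (4 * cos x ^ 2 - 1) / sin x := by
  rw [sin_three_mul_eq_sin_mul, cos_three_mul, div_div, mul_comm (sin x)]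
  ring

theorem four_cos_add_cos_three_mul_sub_one_div_sin_three_mul (x : ℝ) :
    (4 * cos x + cos (3 * x) - 1) / sin (3 * x)
      = (4 * cos x ^ 3 + cos x - 1) / (4 * cos x ^ 2 - 1) / sin x := by
  rw [sin_three_mul_eq_sin_mul, cos_three_mul, div_div, mul_comm (sin x)]
  ring

theorem rational_points_decreasing {c : ℝ} (hc : 0 < c) (h3 : 3 < 4 * c ^ 2) (h1 : c < 1) :
    3 * c - 1 > (3 * c ^ 2 - 1) / c ∧
    (3 * c ^ 2 - 1) / c > (12 * c ^ 3 - 5 * c - 1) / (4 * c ^ 2 - 1) ∧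
    (12 * c ^ 3 - 5 * c - 1) / (4 * c ^ 2 - 1) > (4 * c ^ 3 + c - 1) / (4 * c ^ 2 - 1) ∧
    (4 * c ^ 3 + c - 1) / (4 * c ^ 2 - 1) > c ∧
    c > c - 1 := by
  have hd : 0 < 4 * c ^ 2 - 1 := by linarith
  have hhalf : 1 < 2 * c := by nlinarith
  refine ⟨?_, ?_, ?_, ?_, by linarith⟩
  · rw [gt_iff_lt, div_lt_iff₀ hc]
    nlinarith
  · rw [gt_iff_lt, div_lt_div_iff₀ hd hc]
    nlinarith [mul_pos (sub_pos.2 h1) (by linarith : 0 < 1 + 2 * c)]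
  · exact div_lt_div_of_pos_right (by nlinarith) hd
  · rw [gt_iff_lt, lt_div_iff₀ hd]
    nlinarith

theorem cos_bounds_of_lt_pi_div_six {x : ℝ} (h0 : 0 < x) (h6 : x < π / 6) :
    0 < cos x ∧ 3 < 4 * cos x ^ 2 ∧ cos x < 1 := by
  have hπ := pi_pos
  have hpos : 0 < cos x := cos_pos_of_mem_Ioo ⟨by linarith, by linarith⟩
  have hsix : cos (π / 6) < cos x :=
    cos_lt_cos_of_nonneg_of_le_pi_div_two h0.le (by linarith) h6
  have hone : cos x < cos 0 :=
    cos_lt_cos_of_nonneg_of_le_pi_div_two le_rfl (by linarith) h0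
  refine ⟨hpos, ?_, by rwa [cos_zero] at hone⟩
  nlinarith [sq_cos_pi_div_six, cos_pos_of_mem_Ioo (x := π / 6) ⟨by linarith, by linarith⟩]

theorem algorithm_points_decreasing_of_lt_pi_div_six {x : ℝ} (h0 : 0 < x) (h6 : x < π / 6) :
    (3 * cos x - 1) / sin x > (1 + 3 * cos (2 * x)) / sin (2 * x) ∧
    (1 + 3 * cos (2 * x)) / sin (2 * x) > (4 * cos x + 3 * cos (3 * x) - 1) / sin (3 * x) ∧
    (4 * cos x + 3 * cos (3 * x) - 1) / sin (3 * x) > (4 * cos x + cos (3 * x) - 1) / sin (3 * x) ∧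
    (4 * cos x + cos (3 * x) - 1) / sin (3 * x) > (1 + cos (2 * x)) / sin (2 * x) ∧
    (1 + cos (2 * x)) / sin (2 * x) > (cos x - 1) / sin x := by
  obtain ⟨hc, h3, h1⟩ := cos_bounds_of_lt_pi_div_six h0 h6
  have hs : 0 < sin x := sin_pos_of_pos_of_lt_pi h0 (by linarith [pi_pos])
  rw [one_add_three_cos_two_mul_div_sin_two_mul, one_add_cos_two_mul_div_sin_two_mul hc.ne',
    four_cos_add_three_cos_three_mul_sub_one_div_sin_three_mul,
    four_cos_add_cos_three_mul_sub_one_div_sin_three_mul]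
  simp only [gt_iff_lt, div_lt_div_iff_of_pos_right hs]
  exact rational_points_decreasing hc h3 h1

/-- The five algorithm points on the top edge of the double heptagon transversal
are strictly decreasing, and the last exceeds the left endpoint of the edge. -/
theorem algorithm_points_decreasing :
    (3 * cos (π / 7) - 1) / sin (π / 7) > (1 + 3 * cos (2 * π / 7)) / sin (2 * π / 7) ∧
    (1 + 3 * cos (2 * π / 7)) / sin (2 * π / 7)
      > (4 * cos (π / 7) + 3 * cos (3 * π / 7) - 1) / sin (3 * π / 7) ∧
    (4 * cos (π / 7) + 3 * cos (3 * π / 7) - 1) / sin (3 * π / 7)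
      > (4 * cos (π / 7) + cos (3 * π / 7) - 1) / sin (3 * π / 7) ∧
    (4 * cos (π / 7) + cos (3 * π / 7) - 1) / sin (3 * π / 7)
      > (1 + cos (2 * π / 7)) / sin (2 * π / 7) ∧
    (1 + cos (2 * π / 7)) / sin (2 * π / 7) > (cos (π / 7) - 1) / sin (π / 7) := by
  simp only [mul_div_assoc]
  exact algorithm_points_decreasing_of_lt_pi_div_six (by positivity)
    (div_lt_div_of_pos_left pi_pos (by norm_num) (by norm_num))
end
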